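/- Let n ∈ ℕ, n−1 < α ≤ n, let I ⊆ ℝ be a nonempty open interval, f : I → (0,∞) smooth, β ∈ I, λ₂ ∈ ℝ with λ₂ ≠ 0, and g(x) = λ₂ √(f(x)) + f'(x)/2. Let a ∈ ℝ and let φ, ψ : (0,∞) → ℝ admit Riemann–Liouville derivatives of order α. Define u(x,t) = f(x)^{−1/2} exp(a ω_0(x)) φ(t) and v(x,t) = exp(a ω_0(x)) ψ(t). Then (u,v) satisfies ∂^α_t u = ∂_x v and ∂^α_t v = f(x) ∂_x u + g(x) u on I × (0,∞) if and only if (d^α/dt^α)φ(t) = a ψ(t) and (d^α/dt^α)ψ(t) = (a+λ₂) φ(t) for all t > 0. -/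

import Mathlib

open MeasureTheory Real Set

noncomputable section

/-- The Riemann–Liouville kernel: for `α = n` it is `h` itself; for `n - 1 < α < n`
it is the fractional integral of order `n - α` of `h`. -/
def rlKernel (n : ℕ) (α : ℝ) (h : ℝ → ℝ) : ℝ → ℝ :=
  if α = (n : ℝ) then h
  else fun t => (Real.Gamma ((n : ℝ) - α))⁻¹ *
    ∫ s in (0:ℝ)..t, h s * (t - s) ^ ((n : ℝ) - α - 1)

/-- The Riemann–Liouville fractional derivative of order `α` (with `n - 1 < α ≤ n`). -/
def rlDeriv (n : ℕ) (α : ℝ) (h : ℝ → ℝ) : ℝ → ℝ :=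
  iteratedDeriv n (rlKernel n α h)

/-- The Riemann–Liouville derivative of order `α` of `h` exists on `(0, ∞)`. -/
def HasRLDerivOn (n : ℕ) (α : ℝ) (h : ℝ → ℝ) : Prop :=
  ContDiffOn ℝ n (rlKernel n α h) (Set.Ioi 0)

lemma myIteratedDeriv_const_mul (c : ℝ) :
    ∀ (n : ℕ) (F : ℝ → ℝ),
      iteratedDeriv n (fun x => c * F x) = fun x => c * iteratedDeriv n F x
  | 0, F => by simp [iteratedDeriv]
  | (n+1), F => by
      rw [iteratedDeriv_succ', iteratedDeriv_succ']
      have h1 : deriv (fun x => c * F x) = fun x => c * deriv F x :=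
        deriv_const_mul_field' c
      rw [h1, myIteratedDeriv_const_mul c n (deriv F)]

lemma rlDeriv_const_mul (n : ℕ) (α c : ℝ) (h : ℝ → ℝ) (t : ℝ) :
    rlDeriv n α (fun s => c * h s) t = c * rlDeriv n α h t := by
  have hk : rlKernel n α (fun s => c * h s) = fun t => c * rlKernel n α h t := by
    unfold rlKernel
    split
    · rfl
    · funext t
      simp_rw [mul_assoc c, intervalIntegral.integral_const_mul]
      ring
  rw [rlDeriv, rlDeriv, hk, myIteratedDeriv_const_mul]

/-- For the ansatz `u = f^{-1/2} e^{a ω₀} φ(t)`, `v = e^{a ω₀} ψ(t)`,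
the pair `(u, v)` solves the time-fractional telegraph system with
`g = λ₂ √f + f'/2` if and only if `(φ, ψ)` solves the reduced system
`dᵅφ/dtᵅ = a ψ`, `dᵅψ/dtᵅ = (a + λ₂) φ` (subalgebra `W₃ = X₃ + aX₁`). -/
theorem invariant_solution_W3_reduction_iff
    (n : ℕ) (α : ℝ) (hn : (n : ℝ) - 1 < α) (hα : α ≤ n)
    (I : Set ℝ) (hI : IsOpen I) (hIc : I.OrdConnected) (hne : I.Nonempty)
    (f : ℝ → ℝ) (hfpos : ∀ x ∈ I, 0 < f x) (hfs : ContDiffOn ℝ (⊤ : ℕ∞) f I)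
    (β : ℝ) (hβ : β ∈ I) (lam₂ : ℝ) (hlam₂ : lam₂ ≠ 0)
    (ω : ℝ → ℝ) (hω : ∀ x, ω x = ∫ r in β..x, (Real.sqrt (f r))⁻¹)
    (g : ℝ → ℝ)
    (hg : ∀ x ∈ I, g x = lam₂ * Real.sqrt (f x) + deriv f x / 2)
    (a : ℝ) (φ ψ : ℝ → ℝ)
    (hφRL : HasRLDerivOn n α φ) (hψRL : HasRLDerivOn n α ψ)
    (u v : ℝ → ℝ → ℝ)
    (hu : ∀ x t, u x t = (Real.sqrt (f x))⁻¹ * Real.exp (a * ω x) * φ t)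
    (hv : ∀ x t, v x t = Real.exp (a * ω x) * ψ t) :
    (∀ x ∈ I, ∀ t ∈ Set.Ioi (0:ℝ),
        rlDeriv n α (fun s => u x s) t = deriv (fun y => v y t) x ∧
        rlDeriv n α (fun s => v x s) t
          = f x * deriv (fun y => u y t) x + g x * u x t) ↔
      (∀ t ∈ Set.Ioi (0:ℝ),
        rlDeriv n α φ t = a * ψ t ∧ rlDeriv n α ψ t = (a + lam₂) * φ t) := by
  -- basic facts
  have hfd : DifferentiableOn ℝ f I := hfs.differentiableOn (by simp)
  have hsqrt_pos : ∀ x ∈ I, (0:ℝ) < Real.sqrt (f x) := fun x hx =>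
    Real.sqrt_pos.mpr (hfpos x hx)
  have hcont_inv : ContinuousOn (fun r => (Real.sqrt (f r))⁻¹) I := by
    apply ContinuousOn.inv₀
    · exact hfs.continuousOn.sqrt
    · intro x hx; exact (hsqrt_pos x hx).ne'
  have hωderiv : ∀ x ∈ I, HasDerivAt ω ((Real.sqrt (f x))⁻¹) x := by
    intro x hx
    have hωF : ω = fun y => ∫ r in β..y, (Real.sqrt (f r))⁻¹ := funext hω
    rw [hωF]
    have hsub : uIcc β x ⊆ I := hIc.uIcc_subset hβ hx
    have hint : IntervalIntegrable (fun r => (Real.sqrt (f r))⁻¹) volume β x :=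
      (hcont_inv.mono hsub).intervalIntegrable
    have hms : StronglyMeasurableAtFilter (fun r => (Real.sqrt (f r))⁻¹) (nhds x) volume :=
      hcont_inv.stronglyMeasurableAtFilter hI x hx
    have hca : ContinuousAt (fun r => (Real.sqrt (f r))⁻¹) x :=
      hcont_inv.continuousAt (hI.mem_nhds hx)
    exact intervalIntegral.integral_hasDerivAt_right hint hms hca
  -- pointwise derivative computations
  have key : ∀ x ∈ I, ∀ t : ℝ,
      deriv (fun y => v y t) x
        = Real.exp (a * ω x) * (a * (Real.sqrt (f x))⁻¹) * ψ t ∧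
      f x * deriv (fun y => u y t) x + g x * u x t
        = Real.exp (a * ω x) * ((a + lam₂) * φ t) := by
    intro x hx t
    set s := Real.sqrt (f x) with hs
    have hs0 : s ≠ 0 := (hsqrt_pos x hx).ne'
    have hs2 : s ^ 2 = f x := Real.sq_sqrt (hfpos x hx).le
    have hfx : HasDerivAt f (deriv f x) x :=
      ((hfd.differentiableAt (hI.mem_nhds hx))).hasDerivAt
    have hsq : HasDerivAt (fun y => Real.sqrt (f y)) (1 / (2 * s) * deriv f x) x :=
      (Real.hasDerivAt_sqrt (hfpos x hx).ne').comp x hfx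
    have hsqinv : HasDerivAt (fun y => (Real.sqrt (f y))⁻¹)
        (-(1 / (2 * s) * deriv f x) / s ^ 2) x := hsq.inv hs0
    have he : HasDerivAt (fun y => Real.exp (a * ω y))
        (Real.exp (a * ω x) * (a * s⁻¹)) x :=
      ((hωderiv x hx).const_mul a).exp
    constructor
    · have hveq : (fun y => v y t) = fun y => Real.exp (a * ω y) * ψ t := by
        funext y; exact hv y t
      rw [hveq, (he.mul_const (ψ t)).deriv]
    · have hueq : (fun y => u y t)
          = fun y => (Real.sqrt (f y))⁻¹ * Real.exp (a * ω y) * φ t := by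
        funext y; exact hu y t
      rw [hueq, ((hsqinv.fun_mul he).mul_const (φ t)).deriv, hu x t, hg x hx, ← hs]
      have hfx2 : f x = s ^ 2 := hs2.symm
      rw [hfx2]
      field_simp
      ring
  constructor
  · intro H t ht
    obtain ⟨x, hx⟩ := hne
    obtain ⟨h1, h2⟩ := H x hx t ht
    have hs0 : Real.sqrt (f x) ≠ 0 := (hsqrt_pos x hx).ne'
    have hE0 : Real.exp (a * ω x) ≠ 0 := Real.exp_ne_zero _
    obtain ⟨k1, k2⟩ := key x hx t
    have hueq : (fun sτ => u x sτ) = fun sτ => ((Real.sqrt (f x))⁻¹ * Real.exp (a * ω x)) * φ sτ := by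
      funext τ; rw [hu x τ]
    have hveq : (fun sτ => v x sτ) = fun sτ => Real.exp (a * ω x) * ψ sτ := by
      funext τ; exact hv x τ
    rw [hueq, rlDeriv_const_mul, k1] at h1
    rw [hveq, rlDeriv_const_mul, k2] at h2
    constructor
    · have hc0 : (Real.sqrt (f x))⁻¹ * Real.exp (a * ω x) ≠ 0 :=
        mul_ne_zero (inv_ne_zero hs0) hE0
      apply mul_left_cancel₀ hc0
      rw [h1]; ring
    · exact mul_left_cancel₀ hE0 h2
  · intro H x hx t ht
    obtain ⟨h1, h2⟩ := H t ht
    obtain ⟨k1, k2⟩ := key x hx t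
    have hueq : (fun sτ => u x sτ) = fun sτ => ((Real.sqrt (f x))⁻¹ * Real.exp (a * ω x)) * φ sτ := by
      funext τ; rw [hu x τ]
    have hveq : (fun sτ => v x sτ) = fun sτ => Real.exp (a * ω x) * ψ sτ := by
      funext τ; exact hv x τ
    constructor
    · rw [hueq, rlDeriv_const_mul, h1, k1]; ring
    · rw [hveq, rlDeriv_const_mul, h2, k2]
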